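/- Let (L,∀) be a strong monadic NM-algebra and F a proper monadic filter of (L,∀). The following are equivalent: (1) F is a prime monadic filter, i.e. for all monadic filters F₁, F₂, if F₁ ∩ F₂ ⊆ F then F₁ ⊆ F or F₂ ⊆ F; (2) for all x, y ∈ L, if ∀x ∨ ∀y ∈ F then ∀x ∈ F or ∀y ∈ F; (3) for all x, y ∈ L, ∀x → ∀y ∈ F or ∀y → ∀x ∈ F. -/
import Mathlib


/-- An NM-algebra: a bounded lattice with a commutative monoid operation `odot`
(unit `⊤`) and a residuated implication `imp`, satisfying prelinearity, the weak
nilpotent minimum identity and involution of the negation `nneg x = imp x ⊥`. -/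
class NMAlgebra (L : Type*) extends Lattice L, BoundedOrder L where
  odot : L → L → L
  imp : L → L → L
  odot_comm : ∀ x y : L, odot x y = odot y x
  odot_assoc : ∀ x y z : L, odot (odot x y) z = odot x (odot y z)
  odot_top : ∀ x : L, odot x ⊤ = x
  residuation : ∀ x y z : L, odot x y ≤ z ↔ x ≤ imp y z
  prelinearity : ∀ x y : L, imp x y ⊔ imp y x = ⊤
  wnm : ∀ x y : L, imp (odot x y) ⊥ ⊔ imp (x ⊓ y) (odot x y) = ⊤
  involution : ∀ x : L, imp (imp x ⊥) ⊥ = x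

namespace NMAlgebra

variable {L : Type*} [NMAlgebra L]

/-- Negation `¬x := x → 0`. -/
def nneg (x : L) : L := imp x ⊥

/-- `x ⊕ y := ¬x → y`. -/
def oplus (x y : L) : L := imp (nneg x) y

/-- `n`-fold `⊙`-power, with `opow a 0 = ⊤`. -/
def opow (a : L) : ℕ → L
  | 0 => ⊤
  | n + 1 => odot a (opow a n)

/-- A universal quantifier on an NM-algebra: (U1)–(U4). -/
def IsUQ (q : L → L) : Prop :=
  (∀ x : L, q x ≤ x) ∧
  (∀ x y : L, q (imp (nneg x) (q y)) = imp (nneg (q x)) (q y)) ∧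
  (∀ x y : L, q (imp (q x) y) = imp (q x) (q y)) ∧
  (∀ x y : L, q (x ⊔ q y) = q x ⊔ q y)

/-- A strong universal quantifier on an NM-algebra: (U1),(U2),(U3),(U4'). -/
def IsStrongUQ (q : L → L) : Prop :=
  (∀ x : L, q x ≤ x) ∧
  (∀ x y : L, q (imp (nneg x) (q y)) = imp (nneg (q x)) (q y)) ∧
  (∀ x y : L, q (imp (q x) y) = imp (q x) (q y)) ∧
  (∀ x y : L, q (x ⊔ y) = q x ⊔ q y)

/-- A filter of an NM-algebra: nonempty, closed under `⊙` and upward closed. -/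
def IsNMFilter (F : Set L) : Prop :=
  F.Nonempty ∧ (∀ x ∈ F, ∀ y ∈ F, odot x y ∈ F) ∧ ∀ x ∈ F, ∀ y : L, x ≤ y → y ∈ F

/-- A monadic filter of `(L, q)`: a filter closed under `q`. -/
def IsMonadicFilter (q : L → L) (F : Set L) : Prop :=
  IsNMFilter F ∧ ∀ x ∈ F, q x ∈ F

/-- The smallest monadic filter containing `X`. -/
def genMF (q : L → L) (X : Set L) : Set L :=
  ⋂₀ {F : Set L | IsMonadicFilter q F ∧ X ⊆ F}

/-- The smallest filter containing `X`. -/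
def genF (X : Set L) : Set L :=
  ⋂₀ {F : Set L | IsNMFilter F ∧ X ⊆ F}

/-- A filter of the subalgebra carried by `S ⊆ L`: a nonempty subset of `S`
closed under `⊙` and upward closed within `S`. -/
def IsFilterOn (S : Set L) (G : Set L) : Prop :=
  G ⊆ S ∧ G.Nonempty ∧ (∀ x ∈ G, ∀ y ∈ G, odot x y ∈ G) ∧
    ∀ x ∈ G, ∀ y ∈ S, x ≤ y → y ∈ G

/-- A prime monadic filter: a proper monadic filter `P` such that
`F₁ ∩ F₂ ⊆ P` implies `F₁ ⊆ P` or `F₂ ⊆ P` for monadic filters `F₁, F₂`. -/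
def IsPrimeMF (q : L → L) (P : Set L) : Prop :=
  IsMonadicFilter q P ∧ P ≠ Set.univ ∧
    ∀ F₁ F₂ : Set L, IsMonadicFilter q F₁ → IsMonadicFilter q F₂ →
      F₁ ∩ F₂ ⊆ P → F₁ ⊆ P ∨ F₂ ⊆ P

/-- A prime filter: a proper filter `P` with `x ⊔ y ∈ P → x ∈ P ∨ y ∈ P`. -/
def IsPrimeF (P : Set L) : Prop :=
  IsNMFilter P ∧ P ≠ Set.univ ∧ ∀ x y : L, x ⊔ y ∈ P → x ∈ P ∨ y ∈ P

/-- A monadic congruence on `(L, q)`: an equivalence relation compatible with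
`⊓`, `⊔`, `⊙`, `→` and with `q`. -/
def IsMonadicCong (q : L → L) (θ : L → L → Prop) : Prop :=
  Equivalence θ ∧
  (∀ a b c d : L, θ a b → θ c d → θ (a ⊓ c) (b ⊓ d)) ∧
  (∀ a b c d : L, θ a b → θ c d → θ (a ⊔ c) (b ⊔ d)) ∧
  (∀ a b c d : L, θ a b → θ c d → θ (odot a c) (odot b d)) ∧
  (∀ a b c d : L, θ a b → θ c d → θ (imp a c) (imp b d)) ∧
  ∀ a b : L, θ a b → θ (q a) (q b)

end NMAlgebra

open NMAlgebra

section Helpers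

variable {L : Type*} [NMAlgebra L]

private lemma top_odot (a : L) : odot ⊤ a = a := by rw [odot_comm]; exact odot_top a

private lemma imp_self_eq_top (a : L) : imp a a = (⊤ : L) :=
  le_antisymm le_top ((residuation ⊤ a a).mp (by rw [top_odot]))

private lemma imp_top_eq_top (a : L) : imp a (⊤ : L) = ⊤ :=
  le_antisymm le_top ((residuation ⊤ a ⊤).mp le_top)

private lemma le_of_top_le_imp {a b : L} (h : (⊤ : L) ≤ imp a b) : a ≤ b := by
  have := (residuation ⊤ a b).mpr h
  rwa [top_odot] at this

private lemma odot_mono_right {a b c : L} (h : b ≤ c) : odot a b ≤ odot a c := by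
  have h1 : c ≤ imp a (odot a c) := (residuation c a _).mp (by rw [odot_comm])
  have h2 := (residuation b a _).mpr (le_trans h h1)
  rwa [odot_comm] at h2

private lemma odot_mono_left {a b c : L} (h : a ≤ b) : odot a c ≤ odot b c := by
  rw [odot_comm a, odot_comm b]; exact odot_mono_right h

private lemma odot_le_left (a b : L) : odot a b ≤ a := by
  have := odot_mono_right (a := a) (le_top (a := b))
  rwa [odot_top] at this

private lemma odot_le_right (a b : L) : odot a b ≤ b := by
  rw [odot_comm]; exact odot_le_left b a

private lemma mp_le (a b : L) : odot (imp a b) a ≤ b := (residuation _ a b).mpr le_rfl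

private lemma odot_sup (a b c : L) : odot (a ⊔ b) c = odot a c ⊔ odot b c := by
  apply le_antisymm
  · exact (residuation _ c _).mpr (sup_le ((residuation a c _).mp le_sup_left)
      ((residuation b c _).mp le_sup_right))
  · exact sup_le (odot_mono_left le_sup_left) (odot_mono_left le_sup_right)

private lemma odot_sup_right (a b c : L) : odot c (a ⊔ b) = odot c a ⊔ odot c b := by
  rw [odot_comm c, odot_sup, odot_comm a, odot_comm b]

variable {q : L → L}

private lemma q_mono (hq : IsStrongUQ q) {a b : L} (h : a ≤ b) : q a ≤ q b := by
  have h1 : q a ⊔ q b = q b := by rw [← hq.2.2.2, sup_eq_right.mpr h]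
  exact sup_eq_right.mp h1

private lemma q_top (hq : IsStrongUQ q) : q (⊤ : L) = ⊤ := by
  have h := hq.2.2.1 (⊤ : L) ⊤
  rw [imp_top_eq_top, imp_self_eq_top] at h
  exact h

private lemma q_idem (hq : IsStrongUQ q) (a : L) : q (q a) = q a := by
  apply le_antisymm (hq.1 _)
  have h := hq.2.2.1 a (q a)
  rw [imp_self_eq_top, q_top hq] at h
  exact le_of_top_le_imp h.le

private lemma q_odot_fixed (hq : IsStrongUQ q) {a b : L} (ha : q a = a) (hb : q b = b) :
    q (odot a b) = odot a b := by
  apply le_antisymm (hq.1 _)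
  have h1 : a ≤ imp b (odot a b) := (residuation a b _).mp le_rfl
  have h2 : q a ≤ q (imp b (odot a b)) := q_mono hq h1
  rw [ha] at h2
  have h3 : q (imp (q b) (odot a b)) = imp (q b) (q (odot a b)) := hq.2.2.1 b (odot a b)
  rw [hb] at h3
  rw [h3] at h2
  exact (residuation a b _).mpr h2

private lemma q_opow_fixed (hq : IsStrongUQ q) {a : L} (ha : q a = a) (n : ℕ) :
    q (opow a n) = opow a n := by
  induction n with
  | zero => exact q_top hq
  | succ n ih => exact q_odot_fixed hq ha ih

private lemma opow_add (a : L) (n m : ℕ) :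
    opow a (n + m) = odot (opow a n) (opow a m) := by
  induction n with
  | zero => simp [opow, top_odot, Nat.zero_add]
  | succ n ih =>
    have : n + 1 + m = (n + m) + 1 := by omega
    rw [this]
    show odot a (opow a (n + m)) = odot (odot a (opow a n)) (opow a m)
    rw [ih, odot_assoc]

private lemma sup_opow_right {a b : L} (hab : a ⊔ b = ⊤) (m : ℕ) :
    a ⊔ opow b m = ⊤ := by
  induction m with
  | zero => simp [opow]
  | succ m ih =>
    apply le_antisymm le_top
    have h1 : (⊤ : L) = odot (a ⊔ b) (a ⊔ opow b m) := by rw [hab, ih, odot_top]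
    rw [h1, odot_sup, odot_sup_right, odot_sup_right]
    refine sup_le (sup_le ?_ ?_) (sup_le ?_ ?_)
    · exact le_trans (odot_le_left _ _) le_sup_left
    · exact le_trans (odot_le_left _ _) le_sup_left
    · exact le_trans (odot_le_right _ _) le_sup_left
    · exact le_sup_right

private lemma sup_opow {a b : L} (hab : a ⊔ b = ⊤) (n m : ℕ) :
    opow a n ⊔ opow b m = ⊤ := by
  have h := sup_opow_right hab m
  induction n with
  | zero => simp [opow]
  | succ n ih =>
    apply le_antisymm le_top
    have h1 : (⊤ : L) = odot (a ⊔ opow b m) (opow a n ⊔ opow b m) := by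
      rw [h, ih, odot_top]
    rw [h1, odot_sup, odot_sup_right, odot_sup_right]
    refine sup_le (sup_le ?_ ?_) (sup_le ?_ ?_)
    · exact le_sup_left
    · exact le_trans (odot_le_right _ _) le_sup_right
    · exact le_trans (odot_le_left _ _) le_sup_right
    · exact le_trans (odot_le_left _ _) le_sup_right

private lemma top_mem_of_filter {F : Set L} (hF : IsNMFilter F) : (⊤ : L) ∈ F := by
  obtain ⟨⟨x, hx⟩, -, hup⟩ := hF
  exact hup x hx ⊤ le_top

/-- The generated monadic filter used in (1)⇒(3). -/
private lemma gen_props (hq : IsStrongUQ q) {F : Set L} (hF : IsMonadicFilter q F)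
    {a : L} (ha : q a = a) :
    IsMonadicFilter q {z : L | ∃ n : ℕ, ∃ f ∈ F, q f = f ∧ odot (opow a n) f ≤ z} ∧
    F ⊆ {z : L | ∃ n : ℕ, ∃ f ∈ F, q f = f ∧ odot (opow a n) f ≤ z} ∧
    a ∈ {z : L | ∃ n : ℕ, ∃ f ∈ F, q f = f ∧ odot (opow a n) f ≤ z} := by
  set S : Set L := {z : L | ∃ n : ℕ, ∃ f ∈ F, q f = f ∧ odot (opow a n) f ≤ z} with hS
  have htopF : (⊤ : L) ∈ F := top_mem_of_filter hF.1
  have htopS : (⊤ : L) ∈ S := ⟨0, ⊤, htopF, q_top hq, le_top⟩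
  have hFS : F ⊆ S := by
    intro f hf
    refine ⟨0, q f, hF.2 f hf, q_idem hq f, ?_⟩
    show odot ⊤ (q f) ≤ f
    rw [top_odot]; exact hq.1 f
  have haS : a ∈ S := by
    refine ⟨1, ⊤, htopF, q_top hq, ?_⟩
    show odot (odot a ⊤) ⊤ ≤ a
    rw [odot_top, odot_top]
  refine ⟨⟨⟨⟨⊤, htopS⟩, ?_, ?_⟩, ?_⟩, hFS, haS⟩
  · rintro z₁ ⟨n, f, hf, hqf, h₁⟩ z₂ ⟨m, g, hg, hqg, h₂⟩
    refine ⟨n + m, odot f g, hF.1.2.1 f hf g hg, q_odot_fixed hq hqf hqg, ?_⟩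
    have e : odot (opow a (n + m)) (odot f g)
        = odot (odot (opow a n) f) (odot (opow a m) g) := by
      rw [opow_add, odot_assoc, ← odot_assoc (opow a m), odot_comm (opow a m) f,
        odot_assoc f, ← odot_assoc]
    rw [e]
    exact le_trans (odot_mono_left h₁) (odot_mono_right h₂)
  · rintro z ⟨n, f, hf, hqf, h₁⟩ w hw
    exact ⟨n, f, hf, hqf, le_trans h₁ hw⟩
  · rintro z ⟨n, f, hf, hqf, h₁⟩
    refine ⟨n, f, hf, hqf, ?_⟩
    have h2 : q (odot (opow a n) f) ≤ q z := q_mono hq h₁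
    rwa [q_odot_fixed hq (q_opow_fixed hq ha n) hqf] at h2

end Helpers

/-- Theorem 4.13 (1)⇔(2)⇔(3): characterizations of prime monadic filters in a
strong monadic NM-algebra. -/
theorem strong_monadic_nm_prime_monadic_filter_characterization
    {L : Type*} [NMAlgebra L] (q : L → L) (hq : IsStrongUQ q)
    (F : Set L) (hF : IsMonadicFilter q F) (hFp : F ≠ Set.univ) :
    (IsPrimeMF q F ↔ ∀ x y : L, q x ⊔ q y ∈ F → q x ∈ F ∨ q y ∈ F) ∧
    (IsPrimeMF q F ↔ ∀ x y : L, imp (q x) (q y) ∈ F ∨ imp (q y) (q x) ∈ F) := by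
  obtain ⟨hFfil, hFq⟩ := hF
  have hup := hFfil.2.2
  have hodot := hFfil.2.1
  -- (1) ⇒ (3)
  have i13 : IsPrimeMF q F → ∀ x y : L, imp (q x) (q y) ∈ F ∨ imp (q y) (q x) ∈ F := by
    intro h1 x y
    set a : L := imp (q x) (q y) with haa
    set b : L := imp (q y) (q x) with hbb
    have ha : q a = a := by
      have h := hq.2.2.1 x y
      rw [haa, ← h, q_idem hq, h]
    have hb : q b = b := by
      have h := hq.2.2.1 y x
      rw [hbb, ← h, q_idem hq, h]
    have hab : a ⊔ b = ⊤ := prelinearity (q x) (q y)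
    obtain ⟨hSa, hFSa, haSa⟩ := gen_props hq ⟨hFfil, hFq⟩ ha
    obtain ⟨hSb, hFSb, hbSb⟩ := gen_props hq ⟨hFfil, hFq⟩ hb
    have hsub : {z : L | ∃ n : ℕ, ∃ f ∈ F, q f = f ∧ odot (opow a n) f ≤ z} ∩
        {z : L | ∃ n : ℕ, ∃ f ∈ F, q f = f ∧ odot (opow b n) f ≤ z} ⊆ F := by
      rintro z ⟨⟨n, f, hf, hqf, h₁⟩, ⟨m, g, hg, hqg, h₂⟩⟩
      have hfg : odot f g ∈ F := hodot f hf g hg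
      have key : odot f g ≤ z := by
        have e : odot f g = odot (opow a n ⊔ opow b m) (odot f g) := by
          rw [sup_opow hab, top_odot]
        rw [e, odot_sup]
        refine sup_le ?_ ?_
        · exact le_trans (le_trans (odot_mono_right (odot_le_left f g)) h₁) le_rfl
        · exact le_trans (le_trans (odot_mono_right (odot_le_right f g)) h₂) le_rfl
      exact hup (odot f g) hfg z key
    rcases h1.2.2 _ _ hSa hSb hsub with h | h
    · exact Or.inl (h haSa)
    · exact Or.inr (h hbSb)
  -- (3) ⇒ (2)
  have i32 : (∀ x y : L, imp (q x) (q y) ∈ F ∨ imp (q y) (q x) ∈ F) →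
      ∀ x y : L, q x ⊔ q y ∈ F → q x ∈ F ∨ q y ∈ F := by
    intro h3 x y hxy
    rcases h3 x y with h | h
    · right
      have hm : odot (q x ⊔ q y) (imp (q x) (q y)) ∈ F := hodot _ hxy _ h
      refine hup _ hm _ ?_
      rw [odot_sup]
      refine sup_le ?_ (odot_le_left _ _)
      rw [odot_comm]; exact mp_le _ _
    · left
      have hm : odot (q x ⊔ q y) (imp (q y) (q x)) ∈ F := hodot _ hxy _ h
      refine hup _ hm _ ?_
      rw [odot_sup]
      refine sup_le (odot_le_left _ _) ?_
      rw [odot_comm]; exact mp_le _ _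
  -- (2) ⇒ (1)
  have i21 : (∀ x y : L, q x ⊔ q y ∈ F → q x ∈ F ∨ q y ∈ F) → IsPrimeMF q F := by
    intro h2
    refine ⟨⟨hFfil, hFq⟩, hFp, ?_⟩
    intro F₁ F₂ h₁ h₂' hsub
    by_contra hcon
    push_neg at hcon
    obtain ⟨hn1, hn2⟩ := hcon
    obtain ⟨x₁, hx₁, hx₁F⟩ := Set.not_subset.mp hn1
    obtain ⟨x₂, hx₂, hx₂F⟩ := Set.not_subset.mp hn2
    have hq1 : q x₁ ∈ F₁ := h₁.2 x₁ hx₁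
    have hq2 : q x₂ ∈ F₂ := h₂'.2 x₂ hx₂
    have hs1 : q x₁ ⊔ q x₂ ∈ F₁ := h₁.1.2.2 _ hq1 _ le_sup_left
    have hs2 : q x₁ ⊔ q x₂ ∈ F₂ := h₂'.1.2.2 _ hq2 _ le_sup_right
    have hsF : q x₁ ⊔ q x₂ ∈ F := hsub ⟨hs1, hs2⟩
    rcases h2 x₁ x₂ hsF with h | h
    · exact hx₁F (hup _ h _ (hq.1 x₁))
    · exact hx₂F (hup _ h _ (hq.1 x₂))
  exact ⟨⟨fun h1 => i32 (i13 h1), i21⟩, ⟨i13, fun h3 => i21 (i32 h3)⟩⟩
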